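/- arXiv:1409.2233 — 4 statements merged into one kernel-verified Lean document; each statement's English description precedes it below -/
import Mathlib

section
/- Let M₁ and M₂ be matroids on disjoint finite ground sets E₁ and E₂, and let e₁ ∈ E₁, e₂ ∈ E₂ be elements, each neither a loop nor a coloop of its matroid. Suppose S is a matroid on (E₁ ∪ E₂) \ {e₁, e₂} whose bases are exactly the sets (B₁ ∪ B₂) \ {e₁, e₂} with B₁ a basis of M₁, B₂ a basis of M₂, and |(B₁ ∪ B₂) ∩ {e₁, e₂}| = 1. Then the bases of the dual matroid S* are exactly the sets (B₁ ∪ B₂) \ {e₁, e₂} with B₁ a basis of M₁*, B₂ a basis of M₂*, and |(B₁ ∪ B₂) ∩ {e₁, e₂}| = 1. In other words, ((M₁, e₁) ⊕₂ (M₂, e₂))* = (M₁*, e₁) ⊕₂ (M₂*, e₂). -/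
open Set

/-- A circuit of a matroid: a minimal dependent set. -/
def IsCircuit {α : Type*} (M : Matroid α) (C : Set α) : Prop :=
  M.Dep C ∧ ∀ D ⊂ C, ¬ M.Dep D

/-- Matroid isomorphism: a bijection carrying the ground set onto the ground set and
the circuits exactly onto the circuits. -/
def MatroidIso {α β : Type*} (M : Matroid α) (N : Matroid β) : Prop :=
  ∃ φ : α ≃ β, φ '' M.E = N.E ∧ ∀ C ⊆ M.E, (IsCircuit M C ↔ IsCircuit N (φ '' C))

/-- The rank of a set in a matroid: the largest cardinality of an independent subset. -/
noncomputable def mrank {α : Type*} (M : Matroid α) (X : Set α) : ℕ :=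
  sSup {n | ∃ I, I ⊆ X ∧ M.Indep I ∧ I.ncard = n}

/-- A matroid is 2-connected if no proper nonempty subset `T` of the ground set satisfies
`rank T + rank (E \ T) = rank E`. -/
def TwoConnected {α : Type*} (M : Matroid α) : Prop :=
  ∀ T ⊆ M.E, T.Nonempty → T ≠ M.E → mrank M T + mrank M (M.E \ T) ≠ mrank M M.E
/-- An element is a loop if it forms a one-element circuit. -/
def IsLoopElem {α : Type*} (M : Matroid α) (e : α) : Prop := IsCircuit M {e}

/-- An element is a coloop if it is a loop of the dual matroid. -/
def IsColoopElem {α : Type*} (M : Matroid α) (e : α) : Prop := IsCircuit M✶ {e}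

/-- The 2-sum circuit family of `(M₁, e₁)` and `(M₂, e₂)` (with the disjoint union of the
ground sets modelled by the sum type): circuits of `M₁` avoiding `e₁`, circuits of `M₂`
avoiding `e₂`, and unions `(C₁ \ {e₁}) ∪ (C₂ \ {e₂})` for circuits `Cᵢ` through `eᵢ`. -/
def twoSumCircuits {α β : Type*} (M₁ : Matroid α) (M₂ : Matroid β) (e₁ : α) (e₂ : β) :
    Set (Set (α ⊕ β)) :=
  {C | (∃ C₁, IsCircuit M₁ C₁ ∧ e₁ ∉ C₁ ∧ C = Sum.inl '' C₁) ∨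
       (∃ C₂, IsCircuit M₂ C₂ ∧ e₂ ∉ C₂ ∧ C = Sum.inr '' C₂) ∨
       (∃ C₁ C₂, IsCircuit M₁ C₁ ∧ IsCircuit M₂ C₂ ∧ e₁ ∈ C₁ ∧ e₂ ∈ C₂ ∧
          C = Sum.inl '' (C₁ \ {e₁}) ∪ Sum.inr '' (C₂ \ {e₂}))}

/-! Complementation `B ↦ S.E \ B` exchanges the bases of `S` and `S✶`. On a set
`(B₁ ∪ B₂) \ {e₁, e₂}` it complements `B₁` and `B₂` separately, which exchanges the bases of
`Mᵢ` and `Mᵢ✶` and preserves the condition that exactly one of `e₁ ∈ B₁`, `e₂ ∈ B₂` holds. -/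

lemma Matroid.dual_isBase_iff_isBase_compl {α : Type*} {M : Matroid α} (hE : M.E = univ)
    {B : Set α} : M✶.IsBase B ↔ M.IsBase Bᶜ := by
  rw [Matroid.dual_isBase_iff (hE ▸ subset_univ B), hE, compl_eq_univ_sdiff]

section SumImage

variable {α β : Type*} {e₁ : α} {e₂ : β} {B₁ : Set α} {B₂ : Set β}

lemma ncard_inter_pair_eq_one_iff :
    ((Sum.inl '' B₁ ∪ Sum.inr '' B₂) ∩ {Sum.inl e₁, Sum.inr e₂}).ncard = 1 ↔
      Xor (e₁ ∈ B₁) (e₂ ∈ B₂) := by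
  by_cases h₁ : e₁ ∈ B₁ <;> by_cases h₂ : e₂ ∈ B₂ <;>
    simp [inter_insert_of_mem, inter_insert_of_notMem, h₁, h₂, Xor]

lemma ncard_inter_pair_compl_eq_one_iff :
    ((Sum.inl '' B₁ᶜ ∪ Sum.inr '' B₂ᶜ) ∩ {Sum.inl e₁, Sum.inr e₂}).ncard = 1 ↔
      ((Sum.inl '' B₁ ∪ Sum.inr '' B₂) ∩ {Sum.inl e₁, Sum.inr e₂}).ncard = 1 := by
  simp only [ncard_inter_pair_eq_one_iff, mem_compl_iff, xor_not_not]

lemma diff_inl_image_union_inr_image_diff_pair :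
    (univ \ {Sum.inl e₁, Sum.inr e₂}) \
        ((Sum.inl '' B₁ ∪ Sum.inr '' B₂) \ {Sum.inl e₁, Sum.inr e₂}) =
      (Sum.inl '' B₁ᶜ ∪ Sum.inr '' B₂ᶜ) \ {Sum.inl e₁, Sum.inr e₂} := by
  ext (x | x) <;> simp <;> tauto

end SumImage

theorem dual_twoSum_general {α β : Type}
    (M₁ : Matroid α) (M₂ : Matroid β) (hM₁ : M₁.E = Set.univ) (hM₂ : M₂.E = Set.univ)
    (e₁ : α) (e₂ : β)
    (S : Matroid (α ⊕ β))
    (hSE : S.E = Set.univ \ {Sum.inl e₁, Sum.inr e₂})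
    (hS : ∀ B, S.IsBase B ↔ ∃ B₁ B₂, M₁.IsBase B₁ ∧ M₂.IsBase B₂ ∧
        ((Sum.inl '' B₁ ∪ Sum.inr '' B₂) ∩ {Sum.inl e₁, Sum.inr e₂}).ncard = 1 ∧
        B = (Sum.inl '' B₁ ∪ Sum.inr '' B₂) \ {Sum.inl e₁, Sum.inr e₂}) :
    ∀ B, S✶.IsBase B ↔ ∃ B₁ B₂, M₁✶.IsBase B₁ ∧ M₂✶.IsBase B₂ ∧
        ((Sum.inl '' B₁ ∪ Sum.inr '' B₂) ∩ {Sum.inl e₁, Sum.inr e₂}).ncard = 1 ∧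
        B = (Sum.inl '' B₁ ∪ Sum.inr '' B₂) \ {Sum.inl e₁, Sum.inr e₂} := by
  intro B
  rw [Matroid.dual_isBase_iff', hSE]
  constructor
  · rintro ⟨hB, hBE⟩
    obtain ⟨B₁, B₂, hB₁, hB₂, hcard, hBeq⟩ := (hS _).1 hB
    refine ⟨B₁ᶜ, B₂ᶜ, ?_, ?_, ncard_inter_pair_compl_eq_one_iff.2 hcard, ?_⟩
    · rwa [Matroid.dual_isBase_iff_isBase_compl hM₁, compl_compl]
    · rwa [Matroid.dual_isBase_iff_isBase_compl hM₂, compl_compl]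
    · rw [← diff_inl_image_union_inr_image_diff_pair, ← hBeq, sdiff_sdiff_cancel_left hBE]
  · rintro ⟨B₁, B₂, hB₁, hB₂, hcard, rfl⟩
    refine ⟨(hS _).2 ⟨B₁ᶜ, B₂ᶜ, ?_, ?_, ncard_inter_pair_compl_eq_one_iff.2 hcard,
      diff_inl_image_union_inr_image_diff_pair⟩, sdiff_subset_sdiff_left (subset_univ _)⟩
    · exact (Matroid.dual_isBase_iff_isBase_compl hM₁).1 hB₁
    · exact (Matroid.dual_isBase_iff_isBase_compl hM₂).1 hB₂

/-- The dual of a 2-sum is the 2-sum of the duals: if the bases of `S` are the sets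
`(B₁ ∪ B₂) \ {e₁, e₂}` with `Bᵢ` a base of `Mᵢ` and `|(B₁ ∪ B₂) ∩ {e₁, e₂}| = 1`, then the
bases of `S✶` are exactly the analogous sets formed from bases of `M₁✶` and `M₂✶`. -/
theorem dual_twoSum {α β : Type} [Fintype α] [Fintype β]
    (M₁ : Matroid α) (M₂ : Matroid β) (hM₁ : M₁.E = Set.univ) (hM₂ : M₂.E = Set.univ)
    (e₁ : α) (e₂ : β)
    (he₁ : ¬ IsLoopElem M₁ e₁ ∧ ¬ IsColoopElem M₁ e₁)
    (he₂ : ¬ IsLoopElem M₂ e₂ ∧ ¬ IsColoopElem M₂ e₂)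
    (S : Matroid (α ⊕ β))
    (hSE : S.E = Set.univ \ {Sum.inl e₁, Sum.inr e₂})
    (hS : ∀ B, S.IsBase B ↔ ∃ B₁ B₂, M₁.IsBase B₁ ∧ M₂.IsBase B₂ ∧
        ((Sum.inl '' B₁ ∪ Sum.inr '' B₂) ∩ {Sum.inl e₁, Sum.inr e₂}).ncard = 1 ∧
        B = (Sum.inl '' B₁ ∪ Sum.inr '' B₂) \ {Sum.inl e₁, Sum.inr e₂}) :
    ∀ B, S✶.IsBase B ↔ ∃ B₁ B₂, M₁✶.IsBase B₁ ∧ M₂✶.IsBase B₂ ∧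
        ((Sum.inl '' B₁ ∪ Sum.inr '' B₂) ∩ {Sum.inl e₁, Sum.inr e₂}).ncard = 1 ∧
        B = (Sum.inl '' B₁ ∪ Sum.inr '' B₂) \ {Sum.inl e₁, Sum.inr e₂} :=
  dual_twoSum_general M₁ M₂ hM₁ hM₂ e₁ e₂ S hSE hS
end

section
/- Let M be a matroid on a finite ground set E and let B₁ ≠ B₂ be bases of M. The segment with endpoints χ_{B₁} and χ_{B₂} is an edge (a face of dimension 1) of the base polytope P_M if and only if |B₁ Δ B₂| = 2. In particular, every edge of P_M is parallel to a difference e_i − e_j of two standard unit vectors, and the 1-skeleton of P_M is the basis graph of M. -/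
open Set

/-- The base polytope of a matroid on the ground type `α`: the convex hull in `ℝ^α` of the
characteristic vectors of the bases. -/
noncomputable def basePolytope {α : Type*} (M : Matroid α) : Set (α → ℝ) :=
  convexHull ℝ {x | ∃ B, M.IsBase B ∧ x = B.indicator fun _ => (1 : ℝ)}

/-!
A face of `P_M` exposed by a functional `l` is the convex hull of the characteristic vectors of
the bases maximizing `l`. If two bases `B₁ ≠ B₂` maximize `l` and `e ∈ B₁ \ B₂`, the symmetric
exchange property gives `f ∈ B₂ \ B₁` such that `B₁ - e + f` and `B₂ - f + e` are bases; their
`l`-values add up to `l(B₁) + l(B₂)`, so `B₂ - f + e` maximizes `l` as well. Hence every edge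
contains the direction `e_e - e_f`, and if the face is the segment `[χ_{B₁}, χ_{B₂}]` it contains
the vertex `χ_{B₂ - f + e}` (a 0/1 vector is extreme in the unit cube), which forces
`B₁ = B₂ - f + e`. Conversely, if `|B₁ Δ B₂| = 2`, the functional `⟨χ_{B₁} + χ_{B₂}, ·⟩` is
maximized over the bases exactly at `B₁` and `B₂`.
-/

local notation "χ" B:max => Set.indicator B fun _ => (1 : ℝ)

section ConvexHull

theorem vectorSpan_convexHull {𝕜 E : Type*} [Ring 𝕜] [PartialOrder 𝕜] [AddCommGroup E]
    [Module 𝕜 E] (s : Set E) : vectorSpan 𝕜 (convexHull 𝕜 s) = vectorSpan 𝕜 s := by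
  rw [← direction_affineSpan, affineSpan_convexHull, direction_affineSpan]

theorem Set.Nontrivial.of_finrank_vectorSpan_eq_one {k E : Type*} [DivisionRing k]
    [AddCommGroup E] [Module k E] {s : Set E} (h : Module.finrank k (vectorSpan k s) = 1) :
    s.Nontrivial := by
  rw [← not_subsingleton_iff, ← vectorSpan_eq_bot_iff_subsingleton (k := k)]
  intro hbot
  rw [hbot, finrank_bot] at h
  exact zero_ne_one h

theorem ContinuousLinearMap.toExposed_eq_pair {𝕜 E : Type*} [Ring 𝕜] [LinearOrder 𝕜]
    [TopologicalSpace 𝕜] [AddCommMonoid E] [Module 𝕜 E] [TopologicalSpace E] (l : StrongDual 𝕜 E)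
    {s : Set E} {x y : E} (hx : x ∈ s) (hy : y ∈ s) (hxy : l x = l y)
    (hlt : ∀ z ∈ s, z ≠ x → z ≠ y → l z < l x) :
    l.toExposed s = {x, y} := by
  have hmax : ∀ z ∈ s, l z ≤ l x := fun z hz => by
    rcases eq_or_ne z x with rfl | hzx
    · exact le_rfl
    rcases eq_or_ne z y with rfl | hzy
    · exact hxy.ge
    exact (hlt z hz hzx hzy).le
  ext z
  constructor
  · rintro ⟨hz, hzmax⟩
    by_contra hzxy
    rw [mem_insert_iff, mem_singleton_iff, not_or] at hzxy
    exact (hlt z hz hzxy.1 hzxy.2).not_ge (hzmax x hx)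
  · rintro (rfl | rfl)
    exacts [⟨hx, hmax⟩, ⟨hy, hxy ▸ hmax⟩]

variable {𝕜 E : Type*} [Field 𝕜] [LinearOrder 𝕜] [IsStrictOrderedRing 𝕜] [AddCommGroup E]
  [Module 𝕜 E] {s F : Set E}

theorem IsExtreme.subset_convexHull_inter (hF : IsExtreme 𝕜 (convexHull 𝕜 s) F) :
    F ⊆ convexHull 𝕜 (F ∩ s) := by
  intro x hxF
  have hsF : convexHull 𝕜 (s \ F) ⊆ convexHull 𝕜 s \ F :=
    convexHull_min (sdiff_subset_sdiff_left (subset_convexHull 𝕜 s))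
      (hF.convex_sdiff (convex_convexHull 𝕜 s))
  rcases (s \ F).eq_empty_or_nonempty with hout | hout
  · rw [inter_eq_right.2 (sdiff_eq_empty.1 hout)]
    exact hF.subset hxF
  rcases (F ∩ s).eq_empty_or_nonempty with hin | hin
  · have hx : x ∈ convexHull 𝕜 (s \ F) := by
      rw [sdiff_eq_left.2 (disjoint_iff_inter_eq_empty.2 (by rwa [inter_comm]))]
      exact hF.subset hxF
    exact absurd hxF (hsF hx).2
  have hx := hF.subset hxF
  rw [← inter_union_sdiff s F, inter_comm, convexHull_union hin hout, mem_convexJoin] at hx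
  obtain ⟨a, ha, b, hb, hxab⟩ := hx
  rw [← insert_endpoints_openSegment] at hxab
  rcases hxab with rfl | rfl | hxab
  · exact ha
  · exact absurd hxF (hsF hb).2
  · exact absurd (hF.right_mem_of_mem_openSegment (convexHull_mono inter_subset_right ha)
      (hsF hb).1 hxF hxab) (hsF hb).2

variable [TopologicalSpace 𝕜] [TopologicalSpace E] (l : StrongDual 𝕜 E)

theorem ContinuousLinearMap.mem_toExposed_convexHull_iff {x : E} (hx : x ∈ s) :
    x ∈ l.toExposed (convexHull 𝕜 s) ↔ x ∈ l.toExposed s :=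
  ⟨fun h => ⟨hx, fun y hy => h.2 y (subset_convexHull 𝕜 s hy)⟩,
    fun h => ⟨subset_convexHull 𝕜 s hx,
      fun _ hy => convexHull_min h.2 (convex_halfSpace_le l.isLinear (l x)) hy⟩⟩

theorem ContinuousLinearMap.toExposed_convexHull (s : Set E) :
    l.toExposed (convexHull 𝕜 s) = convexHull 𝕜 (l.toExposed s) := by
  have hexp : IsExposed 𝕜 (convexHull 𝕜 s) (l.toExposed (convexHull 𝕜 s)) :=
    ContinuousLinearMap.toExposed.isExposed
  refine Subset.antisymm (fun x hx => ?_) (convexHull_min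
    (fun x hx => (l.mem_toExposed_convexHull_iff hx.1).2 hx)
    (hexp.convex (convex_convexHull 𝕜 s)))
  exact convexHull_mono (fun y hy => (l.mem_toExposed_convexHull_iff hy.2).1 hy.1)
    (hexp.isExtreme.subset_convexHull_inter hx)

end ConvexHull

section IndicatorVectors

variable {α : Type*}

theorem indicator_mem_extremePoints {A : Set (α → ℝ)} (hA : A ⊆ Icc 0 1) {B : Set α}
    (hB : χ B ∈ A) : χ B ∈ extremePoints ℝ A := by
  refine inter_extremePoints_subset_extremePoints_of_subset hA ⟨hB, ?_⟩
  rw [← pi_univ_Icc, extremePoints_pi]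
  intro i _
  by_cases hi : i ∈ B <;> simp [hi, extremePoints_Icc]

theorem indicator_insert_sdiff_singleton [DecidableEq α] {B : Set α} {e f : α} (he : e ∉ B)
    (hf : f ∈ B) : χ (insert e (B \ {f})) = χ B + Pi.single e 1 - Pi.single f 1 := by
  ext i
  rcases eq_or_ne i e with rfl | hie
  · simp [he, (ne_of_mem_of_not_mem hf he).symm]
  rcases eq_or_ne i f with rfl | hif
  · simp [hf, hie]
  · by_cases hi : i ∈ B <;> simp [hi, hie, hif]

theorem symmDiff_insert_sdiff_singleton {B : Set α} {e f : α} (he : e ∉ B) (hf : f ∈ B) :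
    symmDiff (insert e (B \ {f})) B = {e, f} := by
  ext i
  rcases eq_or_ne i e with rfl | hie
  · simp [he, mem_symmDiff]
  rcases eq_or_ne i f with rfl | hif
  · simp [hf, hie, mem_symmDiff]
  · simp [hie, hif, mem_symmDiff]

theorem indicator_dotProduct_indicator [Fintype α] (A B : Set α) :
    (χ A) ⬝ᵥ (χ B) = (A ∩ B).ncard := by
  classical
  simp_rw [dotProduct, ← inter_indicator_mul, mul_one]
  simp only [indicator_apply, Finset.sum_boole, filter_mem_univ_eq_toFinset,
    ncard_eq_toFinset_card']

end IndicatorVectors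

namespace Matroid

variable {α : Type*} {M : Matroid α} {B₁ B₂ : Set α} {e : α}

theorem IsBase.sdiff_nonempty (hB₁ : M.IsBase B₁) (hB₂ : M.IsBase B₂) (hne : B₁ ≠ B₂) :
    (B₁ \ B₂).Nonempty :=
  Set.sdiff_nonempty.2 fun h => hne (hB₁.eq_of_subset_isBase hB₂ h)

theorem IsBase.ncard_inter_lt [M.RankFinite] (hB₁ : M.IsBase B₁) (hB₂ : M.IsBase B₂)
    (hne : B₁ ≠ B₂) : (B₁ ∩ B₂).ncard < B₁.ncard :=
  ncard_lt_ncard (inter_ssubset_left_iff.2 fun h => hne (hB₁.eq_of_subset_isBase hB₂ h))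
    hB₁.finite

theorem IsBase.strong_exchange (hB₁ : M.IsBase B₁) (hB₂ : M.IsBase B₂) (he : e ∈ B₁ \ B₂) :
    ∃ f ∈ B₂ \ B₁, M.IsBase (insert f (B₁ \ {e})) ∧ M.IsBase (insert e (B₂ \ {f})) := by
  have heE : e ∈ M.E := hB₁.subset_ground he.1
  have hecl : e ∈ M.closure B₂ := by rwa [hB₂.closure_eq]
  obtain ⟨f, hfC, hfcl⟩ : ∃ f ∈ M.fundCircuit e B₂ \ {e}, f ∉ M.closure (B₁ \ {e}) := by
    by_contra! h
    exact hB₁.indep.notMem_closure_sdiff_of_mem he.1 <|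
      M.closure_subset_closure_of_subset_closure h <|
        (hB₂.fundCircuit_isCircuit heE he.2).mem_closure_sdiff_singleton_of_mem
          (M.mem_fundCircuit e B₂)
  have hfB₂ : f ∈ B₂ := (M.fundCircuit_subset_insert e B₂ hfC.1).resolve_left hfC.2
  have hfB₁ : f ∉ B₁ := fun h =>
    hfcl (M.subset_closure _ (sdiff_subset.trans hB₁.subset_ground) ⟨h, hfC.2⟩)
  refine ⟨f, ⟨hfB₂, hfB₁⟩,
    hB₁.exchange_base_of_notMem_closure he.1 hfcl (hB₂.subset_ground hfB₂), ?_⟩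
  have hind := (hB₂.indep.mem_fundCircuit_iff hecl he.2).1 hfC.1
  rw [← insert_sdiff_singleton_comm (Ne.symm hfC.2)] at hind
  exact hB₂.exchange_isBase_of_indep he.2 hind

theorem IsBase.ncard_inter_add_ncard_inter_lt [M.RankFinite] {B : Set α} (hB₁ : M.IsBase B₁)
    (hB₂ : M.IsBase B₂) (hB : M.IsBase B) (h : (symmDiff B₁ B₂).ncard = 2) (h₁ : B ≠ B₁)
    (h₂ : B ≠ B₂) : (B₁ ∩ B).ncard + (B₂ ∩ B).ncard < (B₁ ∩ B₂).ncard + B₂.ncard := by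
  have hlt₁ := hB₁.ncard_inter_lt hB h₁.symm
  have hlt₂ := hB₂.ncard_inter_lt hB h₂.symm
  have hr := hB₁.ncard_eq_ncard_of_isBase hB₂
  have hcomm := hB₁.ncard_sdiff_comm hB₂
  have hsplit := ncard_inter_add_ncard_sdiff_eq_ncard B₁ B₂ hB₁.finite
  rw [Set.symmDiff_def,
    ncard_union_eq disjoint_sdiff_sdiff hB₁.finite.sdiff hB₂.finite.sdiff] at h
  omega

end Matroid

section BasePolytope

variable {α : Type*} {M : Matroid α} {B₁ B₂ : Set α}

def baseVectors (M : Matroid α) : Set (α → ℝ) := {x | ∃ B, M.IsBase B ∧ x = χ B}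

theorem indicator_mem_baseVectors {B : Set α} (hB : M.IsBase B) : χ B ∈ baseVectors M :=
  ⟨B, hB, rfl⟩

theorem basePolytope_subset_Icc : basePolytope M ⊆ Icc 0 1 :=
  convexHull_min (by rintro _ ⟨B, -, rfl⟩; exact ⟨indicator_nonneg fun _ _ => zero_le_one,
    indicator_le' (fun _ _ => le_rfl) fun _ _ => zero_le_one⟩) (convex_Icc 0 1)

theorem extremePoints_basePolytope : extremePoints ℝ (basePolytope M) = baseVectors M := by
  refine extremePoints_convexHull_subset.antisymm ?_
  rintro _ ⟨B, hB, rfl⟩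
  exact indicator_mem_extremePoints basePolytope_subset_Icc
    (subset_convexHull ℝ _ (indicator_mem_baseVectors hB))

theorem exists_exchange_mem_toExposed_baseVectors (l : StrongDual ℝ (α → ℝ)) {e : α}
    (hB₁ : M.IsBase B₁) (hB₂ : M.IsBase B₂) (h₁ : χ B₁ ∈ l.toExposed (baseVectors M))
    (h₂ : χ B₂ ∈ l.toExposed (baseVectors M)) (he : e ∈ B₁ \ B₂) :
    ∃ f ∈ B₂ \ B₁, M.IsBase (insert e (B₂ \ {f})) ∧
      χ (insert e (B₂ \ {f})) ∈ l.toExposed (baseVectors M) := by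
  classical
  obtain ⟨f, hf, hB₁', hB₂'⟩ := hB₁.strong_exchange hB₂ he
  have hsum : l (χ (insert f (B₁ \ {e}))) + l (χ (insert e (B₂ \ {f}))) =
      l (χ B₁) + l (χ B₂) := by
    rw [indicator_insert_sdiff_singleton hf.2 he.1, indicator_insert_sdiff_singleton he.2 hf.1]
    simp only [map_sub, map_add]
    ring
  have hle := h₂.2 _ (indicator_mem_baseVectors hB₁')
  have hge := h₁.2 _ h₂.1
  refine ⟨f, hf, hB₂', indicator_mem_baseVectors hB₂', fun y hy => ?_⟩
  linarith [h₂.2 y hy]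

theorem ncard_symmDiff_eq_two_of_isExposed_segment (hB₁ : M.IsBase B₁)
    (hB₂ : M.IsBase B₂) (hne : B₁ ≠ B₂)
    (hexp : IsExposed ℝ (basePolytope M) (segment ℝ (χ B₁) (χ B₂))) :
    (symmDiff B₁ B₂).ncard = 2 := by
  obtain ⟨l, hl⟩ := hexp ⟨_, left_mem_segment ℝ _ _⟩
  have hmem : ∀ {B}, M.IsBase B →
      (χ B ∈ segment ℝ (χ B₁) (χ B₂) ↔ χ B ∈ l.toExposed (baseVectors M)) := fun hB => by
    rw [hl]
    exact l.mem_toExposed_convexHull_iff (indicator_mem_baseVectors hB)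
  obtain ⟨e, he⟩ := hB₁.sdiff_nonempty hB₂ hne
  obtain ⟨f, hf, hB₃, h₃⟩ := exists_exchange_mem_toExposed_baseVectors l hB₁ hB₂
    ((hmem hB₁).1 (left_mem_segment ℝ _ _)) ((hmem hB₂).1 (right_mem_segment ℝ _ _)) he
  have hext : χ (insert e (B₂ \ {f})) ∈ extremePoints ℝ (basePolytope M) := by
    rw [extremePoints_basePolytope]
    exact indicator_mem_baseVectors hB₃
  rcases (mem_extremePoints_iff_forall_segment.1 hext).2 _
    (subset_convexHull ℝ _ (indicator_mem_baseVectors hB₁)) _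
    (subset_convexHull ℝ _ (indicator_mem_baseVectors hB₂)) ((hmem hB₃).2 h₃) with h | h
  · rw [indicator_one_inj ℝ h, symmDiff_insert_sdiff_singleton he.2 hf.1,
      ncard_pair (ne_of_mem_of_not_mem hf.1 he.2).symm]
  · exact absurd ((indicator_one_inj ℝ h).symm ▸ mem_insert e _) he.2

theorem isExposed_segment_of_ncard_symmDiff_eq_two [Fintype α] (hB₁ : M.IsBase B₁)
    (hB₂ : M.IsBase B₂) (h : (symmDiff B₁ B₂).ncard = 2) :
    IsExposed ℝ (basePolytope M) (segment ℝ (χ B₁) (χ B₂)) := by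
  let l : StrongDual ℝ (α → ℝ) :=
    LinearMap.toContinuousLinearMap (dotProductBilin ℝ ℝ (χ B₁ + χ B₂))
  have hl : ∀ B, l (χ B) = ((B₁ ∩ B).ncard + (B₂ ∩ B).ncard : ℕ) := fun B => by
    simp [l, indicator_dotProduct_indicator]
  have hl₁ : l (χ B₁) = ((B₁ ∩ B₂).ncard + B₂.ncard : ℕ) := by
    rw [hl, inter_self, inter_comm, hB₁.ncard_eq_ncard_of_isBase hB₂, add_comm]
  have hl₂ : l (χ B₂) = ((B₁ ∩ B₂).ncard + B₂.ncard : ℕ) := by rw [hl, inter_self]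
  have hface : l.toExposed (baseVectors M) = {χ B₁, χ B₂} := by
    refine l.toExposed_eq_pair (indicator_mem_baseVectors hB₁) (indicator_mem_baseVectors hB₂)
      (hl₁.trans hl₂.symm) ?_
    rintro _ ⟨B, hB, rfl⟩ h₁ h₂
    rw [hl, hl₁, Nat.cast_lt]
    exact hB₁.ncard_inter_add_ncard_inter_lt hB₂ hB h (by rintro rfl; exact h₁ rfl)
      (by rintro rfl; exact h₂ rfl)
  rw [← convexHull_pair, ← hface, ← l.toExposed_convexHull]
  exact ContinuousLinearMap.toExposed.isExposed

theorem finrank_vectorSpan_segment {E : Type*} [AddCommGroup E] [Module ℝ E] {x y : E}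
    (hxy : x ≠ y) : Module.finrank ℝ (vectorSpan ℝ (segment ℝ x y)) = 1 := by
  rw [vectorSpan_segment, finrank_span_singleton (vsub_ne_zero.2 hxy.symm)]

theorem exists_vectorSpan_eq_span_single_sub_single [DecidableEq α] {F : Set (α → ℝ)}
    (hF : IsExposed ℝ (basePolytope M) F) (hrank : Module.finrank ℝ (vectorSpan ℝ F) = 1) :
    ∃ i j, i ≠ j ∧ vectorSpan ℝ F = Submodule.span ℝ {Pi.single i 1 - Pi.single j 1} := by
  obtain ⟨l, hl⟩ := hF (Set.Nontrivial.of_finrank_vectorSpan_eq_one hrank).nonempty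
  obtain rfl : F = convexHull ℝ (l.toExposed (baseVectors M)) :=
    hl.trans (l.toExposed_convexHull _)
  rw [vectorSpan_convexHull] at hrank ⊢
  have : FiniteDimensional ℝ (vectorSpan ℝ (l.toExposed (baseVectors M))) :=
    Module.finite_of_finrank_pos (by omega)
  obtain ⟨_, ⟨⟨B₁, hB₁, rfl⟩, h₁⟩, _, ⟨⟨B₂, hB₂, rfl⟩, h₂⟩, hne⟩ :=
    Set.Nontrivial.of_finrank_vectorSpan_eq_one hrank
  obtain ⟨e, he⟩ := hB₁.sdiff_nonempty hB₂ (by rintro rfl; exact hne rfl)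
  obtain ⟨f, hf, hB₃, h₃⟩ :=
    exists_exchange_mem_toExposed_baseVectors l hB₁ hB₂ ⟨⟨B₁, hB₁, rfl⟩, h₁⟩ ⟨⟨B₂, hB₂, rfl⟩, h₂⟩ he
  have hef : e ≠ f := (ne_of_mem_of_not_mem hf.1 he.2).symm
  have hdiff : Pi.single e 1 - Pi.single f 1 = χ (insert e (B₂ \ {f})) - χ B₂ := by
    rw [indicator_insert_sdiff_singleton he.2 hf.1]
    abel
  have hsingle : (Pi.single e 1 - Pi.single f 1 : α → ℝ) ≠ 0 := by
    rw [sub_ne_zero]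
    intro h
    simpa [hef] using congrFun h e
  refine ⟨e, f, hef, (Submodule.eq_of_le_of_finrank_le ?_ ?_).symm⟩
  · rw [Submodule.span_singleton_le_iff_mem, hdiff]
    exact vsub_mem_vectorSpan ℝ h₃ ⟨⟨B₂, hB₂, rfl⟩, h₂⟩
  · rw [hrank, finrank_span_singleton hsingle]

end BasePolytope

theorem basePolytope_edges_general {α : Type} [Fintype α] [DecidableEq α]
    (M : Matroid α) :
    (∀ B₁ B₂ : Set α, M.IsBase B₁ → M.IsBase B₂ → B₁ ≠ B₂ →
      ((IsExposed ℝ (basePolytope M)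
          (segment ℝ (B₁.indicator fun _ => (1 : ℝ)) (B₂.indicator fun _ => (1 : ℝ))) ∧
        Module.finrank ℝ (vectorSpan ℝ
          (segment ℝ (B₁.indicator fun _ => (1 : ℝ)) (B₂.indicator fun _ => (1 : ℝ)))) = 1) ↔
      (symmDiff B₁ B₂).ncard = 2)) ∧
    (∀ F : Set (α → ℝ), IsExposed ℝ (basePolytope M) F →
      Module.finrank ℝ (vectorSpan ℝ F) = 1 →
      ∃ i j : α, i ≠ j ∧
        vectorSpan ℝ F = Submodule.span ℝ {Pi.single i (1 : ℝ) - Pi.single j (1 : ℝ)}) ∧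
    Set.extremePoints ℝ (basePolytope M) =
      {x | ∃ B, M.IsBase B ∧ x = B.indicator fun _ => (1 : ℝ)} := by
  refine ⟨fun B₁ B₂ hB₁ hB₂ hne => ⟨fun h => ?_, fun h => ?_⟩,
    fun F hF hrank => exists_vectorSpan_eq_span_single_sub_single hF hrank,
    extremePoints_basePolytope⟩
  · exact ncard_symmDiff_eq_two_of_isExposed_segment hB₁ hB₂ hne h.1
  · exact ⟨isExposed_segment_of_ncard_symmDiff_eq_two hB₁ hB₂ h,
      finrank_vectorSpan_segment fun h' => hne (indicator_one_inj ℝ h')⟩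

/-- Edges of the base polytope: for distinct bases `B₁, B₂`, the segment between their
characteristic vectors is an edge (a 1-dimensional face) of `P_M` if and only if
`|B₁ Δ B₂| = 2`. In particular every edge of `P_M` is parallel to a difference
`e_i - e_j` of standard unit vectors, and the 1-skeleton of `P_M` is the basis graph
(its vertices being exactly the characteristic vectors of the bases). -/
theorem basePolytope_edges {α : Type} [Fintype α] [DecidableEq α]
    (M : Matroid α) (hE : M.E = Set.univ) :
    (∀ B₁ B₂ : Set α, M.IsBase B₁ → M.IsBase B₂ → B₁ ≠ B₂ →
      ((IsExposed ℝ (basePolytope M)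
          (segment ℝ (B₁.indicator fun _ => (1 : ℝ)) (B₂.indicator fun _ => (1 : ℝ))) ∧
        Module.finrank ℝ (vectorSpan ℝ
          (segment ℝ (B₁.indicator fun _ => (1 : ℝ)) (B₂.indicator fun _ => (1 : ℝ)))) = 1) ↔
      (symmDiff B₁ B₂).ncard = 2)) ∧
    (∀ F : Set (α → ℝ), IsExposed ℝ (basePolytope M) F →
      Module.finrank ℝ (vectorSpan ℝ F) = 1 →
      ∃ i j : α, i ≠ j ∧
        vectorSpan ℝ F = Submodule.span ℝ {Pi.single i (1 : ℝ) - Pi.single j (1 : ℝ)}) ∧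
    Set.extremePoints ℝ (basePolytope M) =
      {x | ∃ B, M.IsBase B ∧ x = B.indicator fun _ => (1 : ℝ)} :=
  basePolytope_edges_general M
end

section
/- Let M be a matroid on a finite nonempty ground set E with c(M) 2-connected components, where the 2-connected components are the equivalence classes of the relation on E generated by: e ∼ f if e = f or some circuit of M contains both e and f. Then the base polytope P_M has dimension |E| − c(M) (the dimension of its affine hull). In particular, if M is 2-connected then dim(P_M) = |E| − 1. -/
/-!
Summing coordinates over each 2-connected component is a surjective linear map
`L : ℝ^E → ℝ^{components}`, whose kernel has dimension `|E| - c(M)` and is spanned by the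
differences `χ_e - χ_f` of elements in a common component. No circuit meets a component `K`
without lying in it, so every base meets `K` in a basis of `K`; hence `L` is constant on the
vertices of `P_M` and the direction of `P_M` lies in `ker L`. Conversely, if `e, f` lie in a
common circuit `C`, a base `B ⊇ C \ {f}` can be exchanged to `B - e + f`, so `χ_e - χ_f` is a
difference of vertices. For a 2-connected `M`, a component `K ≠ E` would split the rank as
`r(K) + r(E \ K) = r(E)`, so there is only one component.
-/

open Set

/-- The number of 2-connected components of a matroid: the number of equivalence classes
of the equivalence relation on the ground set generated by `e ∼ f` iff `e = f` or some
circuit contains both `e` and `f`. -/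
noncomputable def numComponents {α : Type*} (M : Matroid α) : ℕ :=
  Nat.card (Quot (fun e f : α => e = f ∨ ∃ C, IsCircuit M C ∧ e ∈ C ∧ f ∈ C))

open Module

section FiberSum

variable (R : Type*) {K α κ : Type*} [CommRing R] [Fintype α] [DecidableEq κ]

def fiberSum (q : α → κ) : (α → R) →ₗ[R] (κ → R) :=
  LinearMap.pi fun c => ∑ x with q x = c, LinearMap.proj x

variable {R} {q : α → κ}

@[simp]
lemma fiberSum_apply (v : α → R) (c : κ) : fiberSum R q v c = ∑ x with q x = c, v x := by
  simp [fiberSum]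

lemma fiberSum_indicator (S : Set α) :
    fiberSum R q (S.indicator fun _ => 1) = fun c => ((S ∩ q ⁻¹' {c}).ncard : R) := by
  classical
  ext c
  simp only [fiberSum_apply, Set.indicator_apply, Finset.sum_boole,
    Set.ncard_eq_toFinset_card', Set.toFinset_inter, Finset.filter_filter]
  congr 2
  ext x
  simp [and_comm]

variable [DecidableEq α]

lemma fiberSum_single (x : α) (a : R) : fiberSum R q (Pi.single x a) = Pi.single (q x) a := by
  ext c
  simp [Pi.single_apply, eq_comm]

variable [Fintype κ]

lemma range_fiberSum (hq : q.Surjective) : LinearMap.range (fiberSum R q) = ⊤ := by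
  refine LinearMap.range_eq_top.2 fun w => ⟨∑ c, Pi.single (q.surjInv hq c) (w c), ?_⟩
  simp [map_sum, fiberSum_single, Function.surjInv_eq, Finset.univ_sum_single]

lemma ker_fiberSum (hq : q.Surjective) :
    LinearMap.ker (fiberSum R q) =
      Submodule.span R {v | ∃ x y, q x = q y ∧ Pi.single x 1 - Pi.single y 1 = v} := by
  refine le_antisymm (fun v hv => ?_) (Submodule.span_le.2 ?_)
  · set s := q.surjInv hq
    have hfiber : ∑ x, v x • (Pi.single (s (q x)) 1 : α → R) = 0 := by
      rw [← Finset.sum_fiberwise Finset.univ q]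
      refine Finset.sum_eq_zero fun c _ => ?_
      rw [Finset.sum_congr rfl fun x hx => by rw [(Finset.mem_filter.1 hx).2],
        ← Finset.sum_smul, ← fiberSum_apply, LinearMap.mem_ker.1 hv, Pi.zero_apply, zero_smul]
    have hdecomp : v = ∑ x, v x • (Pi.single x 1 - Pi.single (s (q x)) 1 : α → R) := by
      simp only [smul_sub, Finset.sum_sub_distrib, hfiber, sub_zero]
      exact pi_eq_sum_univ' v
    rw [hdecomp]
    refine Submodule.sum_mem _ fun x _ => Submodule.smul_mem _ _ (Submodule.subset_span ?_)
    exact ⟨x, s (q x), (Function.surjInv_eq hq _).symm, rfl⟩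
  · rintro _ ⟨x, y, hxy, rfl⟩
    simp [fiberSum_single, hxy]

lemma finrank_ker_fiberSum [Field K] (hq : q.Surjective) :
    finrank K (LinearMap.ker (fiberSum K q)) = Fintype.card α - Fintype.card κ := by
  have := LinearMap.finrank_range_add_finrank_ker (fiberSum K q)
  rw [range_fiberSum hq, finrank_top, finrank_fintype_fun_eq_card,
    finrank_fintype_fun_eq_card] at this
  omega

end FiberSum

section Matroid

variable {α : Type*} {M : Matroid α} {B B' C I T X : Set α} {e f : α}

lemma isCircuit_iff_isCircuit : IsCircuit M C ↔ M.IsCircuit C := by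
  rw [Matroid.isCircuit_def, minimal_iff_forall_lt]
  rfl

lemma Matroid.IsCircuit.exists_isBase_exchange (hC : M.IsCircuit C) (he : e ∈ C)
    (hf : f ∈ C) (hef : e ≠ f) :
    ∃ B, M.IsBase B ∧ e ∈ B ∧ f ∉ B ∧ M.IsBase (insert f (B \ {e})) := by
  obtain ⟨B, hB, hCB⟩ := (hC.sdiff_singleton_indep hf).exists_isBase_superset
  have hfB : f ∉ B := fun hfB => hC.not_indep (hB.indep.subset fun x hx => by
    by_cases hxf : x = f
    · exact hxf ▸ hfB
    · exact hCB ⟨hx, hxf⟩)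
  have hfund : C = M.fundCircuit f B :=
    hC.eq_fundCircuit_of_subset hB.indep (by simpa using hCB)
  have hind : M.Indep (insert f B \ {e}) := by
    rw [← hB.indep.mem_fundCircuit_iff (by rw [hB.closure_eq]; exact hC.subset_ground hf) hfB,
      ← hfund]
    exact he
  refine ⟨B, hB, hCB ⟨he, hef⟩, hfB, hB.exchange_isBase_of_indep hfB ?_⟩
  rwa [insert_sdiff_singleton_comm hef.symm]

def IsSeparator (M : Matroid α) (T : Set α) : Prop :=
  ∀ C, M.IsCircuit C → C ⊆ T ∨ Disjoint C T

lemma IsSeparator.ground_diff (hT : IsSeparator M T) : IsSeparator M (M.E \ T) := by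
  intro C hC
  rcases hT C hC with hCT | hCT
  · exact .inr (disjoint_sdiff_right.mono_left hCT)
  · exact .inl (subset_sdiff.2 ⟨hC.subset_ground, hCT⟩)

lemma IsSeparator.isBasis_inter (hT : IsSeparator M T) (hTE : T ⊆ M.E) (hB : M.IsBase B) :
    M.IsBasis (B ∩ T) T := by
  refine (hB.indep.inter_right T).isBasis_of_subset_of_subset_closure inter_subset_right
    fun x hxT => ?_
  by_cases hxB : x ∈ B
  · exact M.subset_closure (B ∩ T) (inter_subset_right.trans hTE) ⟨hxB, hxT⟩
  have hC := hB.fundCircuit_isCircuit (hTE hxT) hxB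
  have hxC := M.mem_fundCircuit x B
  have hCT : M.fundCircuit x B ⊆ T :=
    (hT _ hC).resolve_right fun hdisj => hdisj.notMem_of_mem_left hxC hxT
  have hCB : M.fundCircuit x B \ {x} ⊆ B ∩ T := fun y hy =>
    ⟨(M.fundCircuit_subset_insert x B hy.1).resolve_left hy.2, hCT hy.1⟩
  exact M.closure_subset_closure hCB (hC.mem_closure_sdiff_singleton_of_mem hxC)

lemma IsSeparator.ncard_inter_eq (hT : IsSeparator M T) (hTE : T ⊆ M.E) (hB : M.IsBase B)
    (hB' : M.IsBase B') : (B ∩ T).ncard = (B' ∩ T).ncard := by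
  rw [ncard_def, ncard_def, (hT.isBasis_inter hTE hB).encard_eq_encard (hT.isBasis_inter hTE hB')]

lemma mrank_eq_ncard (hI : M.IsBasis I X) (hIfin : I.Finite) : mrank M X = I.ncard := by
  refine IsGreatest.csSup_eq ⟨⟨I, hI.subset, hI.indep, rfl⟩, ?_⟩
  rintro _ ⟨J, hJX, hJ, rfl⟩
  rw [ncard_def, ncard_def]
  exact ENat.toNat_le_toNat (hI.encard_eq_eRk ▸ hJ.encard_le_eRk_of_subset hJX)
    hIfin.encard_lt_top.ne

lemma IsSeparator.mrank_add_mrank_ground_diff [M.RankFinite] (hT : IsSeparator M T)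
    (hTE : T ⊆ M.E) : mrank M T + mrank M (M.E \ T) = mrank M M.E := by
  obtain ⟨B, hB⟩ := M.exists_isBase
  have hBdiff : B ∩ (M.E \ T) = B \ T := by
    rw [← inter_sdiff_assoc, inter_eq_left.2 hB.subset_ground]
  rw [mrank_eq_ncard (hT.isBasis_inter hTE hB) (hB.finite.inter_of_left T),
    mrank_eq_ncard (hT.ground_diff.isBasis_inter sdiff_subset hB) (hB.finite.inter_of_left _),
    mrank_eq_ncard hB.isBasis_ground hB.finite, hBdiff,
    ncard_inter_add_ncard_sdiff_eq_ncard B T hB.finite]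

def circuitRel (M : Matroid α) (e f : α) : Prop :=
  e = f ∨ ∃ C, IsCircuit M C ∧ e ∈ C ∧ f ∈ C

lemma isSeparator_preimage_quot_circuitRel (c : Quot (circuitRel M)) :
    IsSeparator M (Quot.mk _ ⁻¹' {c}) := by
  intro C hC
  by_cases h : ∃ x ∈ C, Quot.mk _ x = c
  · obtain ⟨x, hxC, rfl⟩ := h
    exact .inl fun y hyC => Quot.sound (.inr ⟨C, isCircuit_iff_isCircuit.2 hC, hyC, hxC⟩)
  · exact .inr (disjoint_left.2 fun y hyC hy => h ⟨y, hyC, hy⟩)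

lemma subsingleton_quot_circuitRel [Finite α] (hE : M.E = univ) (hM : TwoConnected M) :
    Subsingleton (Quot (circuitRel M)) := by
  refine ⟨Quot.ind fun a => Quot.ind fun b => by_contra fun hab => ?_⟩
  have hT := isSeparator_preimage_quot_circuitRel (Quot.mk (circuitRel M) a)
  have hTE : Quot.mk (circuitRel M) ⁻¹' {Quot.mk _ a} ⊆ M.E := hE ▸ subset_univ _
  refine hM _ hTE ⟨a, rfl⟩ (fun hTE' => hab ?_) (hT.mrank_add_mrank_ground_diff hTE)
  have hb : b ∈ Quot.mk (circuitRel M) ⁻¹' {Quot.mk _ a} := hTE' ▸ hE ▸ mem_univ b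
  exact (mem_singleton_iff.1 hb).symm

def baseIndicators (M : Matroid α) : Set (α → ℝ) :=
  {x | ∃ B, M.IsBase B ∧ x = B.indicator fun _ => (1 : ℝ)}

lemma vectorSpan_basePolytope :
    vectorSpan ℝ (basePolytope M) = vectorSpan ℝ (baseIndicators M) := by
  rw [← direction_affineSpan, ← direction_affineSpan, basePolytope, affineSpan_convexHull]
  rfl

lemma indicator_sub_indicator_exchange [DecidableEq α] {R : Type*} [Ring R] (he : e ∈ B)
    (hf : f ∉ B) : (B.indicator fun _ => (1 : R)) - (insert f (B \ {e})).indicator (fun _ => 1) =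
      Pi.single e 1 - Pi.single f 1 := by
  ext x
  by_cases hxe : x = e <;> by_cases hxf : x = f <;> by_cases hxB : x ∈ B <;>
    simp_all

lemma single_sub_single_mem_vectorSpan [DecidableEq α] (h : Relation.EqvGen (circuitRel M) e f) :
    (Pi.single e 1 - Pi.single f 1 : α → ℝ) ∈ vectorSpan ℝ (baseIndicators M) := by
  induction h with
  | rel x y hxy =>
    obtain rfl | ⟨C, hC, hxC, hyC⟩ := hxy
    · simp
    obtain rfl | hxy := eq_or_ne x y
    · simp
    obtain ⟨B, hB, hxB, hyB, hB'⟩ :=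
      (isCircuit_iff_isCircuit.1 hC).exists_isBase_exchange hxC hyC hxy
    rw [← indicator_sub_indicator_exchange hxB hyB]
    exact vsub_mem_vectorSpan ℝ ⟨B, hB, rfl⟩ ⟨_, hB', rfl⟩
  | refl => simp
  | symm x y _ ih => simpa using neg_mem ih
  | trans x y z _ _ ih₁ ih₂ => simpa using add_mem ih₁ ih₂

lemma vectorSpan_baseIndicators [Fintype α] [DecidableEq α] [Fintype (Quot (circuitRel M))]
    [DecidableEq (Quot (circuitRel M))] (hE : M.E = univ) :
    vectorSpan ℝ (baseIndicators M) = LinearMap.ker (fiberSum ℝ (Quot.mk (circuitRel M))) := by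
  refine le_antisymm ?_ ?_
  · rw [vectorSpan_def, Submodule.span_le]
    rintro _ ⟨_, ⟨B, hB, rfl⟩, _, ⟨B', hB', rfl⟩, rfl⟩
    simp only [SetLike.mem_coe, LinearMap.mem_ker, vsub_eq_sub, map_sub, fiberSum_indicator,
      sub_eq_zero]
    ext c
    rw [(isSeparator_preimage_quot_circuitRel c).ncard_inter_eq (hE ▸ subset_univ _) hB hB']
  · rw [ker_fiberSum Quot.mk_surjective, Submodule.span_le]
    rintro _ ⟨x, y, hxy, rfl⟩
    exact single_sub_single_mem_vectorSpan (Quot.eqvGen_exact hxy)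

end Matroid

/-- The base polytope of a matroid on a nonempty finite ground set `E` has dimension
`|E| - c(M)`, where `c(M)` is the number of 2-connected components. In particular, for a
2-connected matroid the dimension is `|E| - 1`. -/
theorem basePolytope_dim {α : Type} [Fintype α] [Nonempty α]
    (M : Matroid α) (hE : M.E = Set.univ) :
    Module.finrank ℝ (vectorSpan ℝ (basePolytope M)) = Fintype.card α - numComponents M ∧
    (TwoConnected M →
      Module.finrank ℝ (vectorSpan ℝ (basePolytope M)) = Fintype.card α - 1) := by
  classical
  have := Fintype.ofFinite (Quot (circuitRel M))
  have hcard : numComponents M = Nat.card (Quot (circuitRel M)) := rfl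
  have hdim :
      finrank ℝ (vectorSpan ℝ (basePolytope M)) = Fintype.card α - numComponents M := by
    rw [vectorSpan_basePolytope, vectorSpan_baseIndicators hE,
      finrank_ker_fiberSum Quot.mk_surjective, hcard, Nat.card_eq_fintype_card]
  refine ⟨hdim, fun hM => ?_⟩
  have := subsingleton_quot_circuitRel hE hM
  have : Nonempty (Quot (circuitRel M)) := ⟨Quot.mk _ (Classical.arbitrary α)⟩
  rw [hdim, hcard, Nat.card_unique]
end

section
/- For every n ≥ 2, the number of isomorphism classes of pointed UMR-trees with n legs whose pointed vertex is an R-vertex equals the number of isomorphism classes of pointed UMR-trees with n legs whose pointed vertex is an M-vertex (in generating function terms, A_R(x) = A_M(x)). -/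
open Set

/-- A UMR-tree: a finite tree whose vertices are either legs (which must be leaves) or
labelled vertices carrying a uniform matroid `U_{m,k}` with `m` the degree of the vertex,
where each label is a multiedge (`k = 1`, `m ≥ 3`), a ring (`k = m - 1`, `m ≥ 3`) or a
proper uniform matroid (`2 ≤ k ≤ m - 2`, `m ≥ 4`), and no two ring vertices and no two
multiedge vertices are adjacent. The field `rnk v` records `k` for a labelled vertex `v`. -/
structure UMRTree where
  V : Type
  finite : Finite V
  G : SimpleGraph V
  isTree : G.IsTree
  leg : V → Prop
  rnk : V → ℕ
  leg_leaf : ∀ v, leg v → (G.neighborSet v).ncard = 1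
  label_cond : ∀ v, ¬ leg v →
      (rnk v = 1 ∧ 3 ≤ (G.neighborSet v).ncard) ∨
      (rnk v + 1 = (G.neighborSet v).ncard ∧ 3 ≤ (G.neighborSet v).ncard) ∨
      (2 ≤ rnk v ∧ rnk v + 2 ≤ (G.neighborSet v).ncard ∧ 4 ≤ (G.neighborSet v).ncard)
  no_MM : ∀ v w, G.Adj v w → ¬ leg v → ¬ leg w → rnk v = 1 → rnk w ≠ 1
  no_RR : ∀ v w, G.Adj v w → ¬ leg v → ¬ leg w →
      rnk v + 1 = (G.neighborSet v).ncard → rnk w + 1 ≠ (G.neighborSet w).ncard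

/-- The number of legs (the size) of a UMR-tree. -/
noncomputable def UMRTree.numLegs (T : UMRTree) : ℕ := {v | T.leg v}.ncard

/-- Isomorphism of UMR-trees: a graph isomorphism preserving legs and vertex labels
(the degree `m` is automatically preserved, so it suffices to preserve `rnk`). -/
def UMRIso (T₁ T₂ : UMRTree) : Prop :=
  ∃ φ : T₁.V ≃ T₂.V, (∀ v w, T₁.G.Adj v w ↔ T₂.G.Adj (φ v) (φ w)) ∧
    (∀ v, T₁.leg v ↔ T₂.leg (φ v)) ∧ ∀ v, ¬ T₁.leg v → T₁.rnk v = T₂.rnk (φ v)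

/-- A pointed UMR-tree: a UMR-tree with a distinguished leg, the virtual leg. The virtual
leg counts toward the degree of its neighbour (the pointed vertex) but not toward the
size. -/
structure PointedUMRTree where
  T : UMRTree
  v0 : T.V
  leg_v0 : T.leg v0

/-- The size of a pointed UMR-tree: the number of legs other than the virtual leg. -/
noncomputable def PointedUMRTree.size (P : PointedUMRTree) : ℕ :=
  {v | P.T.leg v ∧ v ≠ P.v0}.ncard

/-- The pointed vertex (the labelled vertex adjacent to the virtual leg) is an R-vertex,
i.e. carries a label `U_{m, m-1}`. -/
def PointedUMRTree.pointedAtR (P : PointedUMRTree) : Prop :=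
  ∃ w, P.T.G.Adj P.v0 w ∧ ¬ P.T.leg w ∧ P.T.rnk w + 1 = (P.T.G.neighborSet w).ncard

/-- The pointed vertex (the labelled vertex adjacent to the virtual leg) is an M-vertex,
i.e. carries a label `U_{m, 1}`. -/
def PointedUMRTree.pointedAtM (P : PointedUMRTree) : Prop :=
  ∃ w, P.T.G.Adj P.v0 w ∧ ¬ P.T.leg w ∧ P.T.rnk w = 1

/-- Isomorphism of pointed UMR-trees: an isomorphism of UMR-trees additionally preserving
the virtual leg. -/
def PointedIso (P₁ P₂ : PointedUMRTree) : Prop :=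
  ∃ φ : P₁.T.V ≃ P₂.T.V, (∀ v w, P₁.T.G.Adj v w ↔ P₂.T.G.Adj (φ v) (φ w)) ∧
    (∀ v, P₁.T.leg v ↔ P₂.T.leg (φ v)) ∧
    (∀ v, ¬ P₁.T.leg v → P₁.T.rnk v = P₂.T.rnk (φ v)) ∧
    φ P₁.v0 = P₂.v0

lemma UMRTree.rnk_lt (T : UMRTree) {v : T.V} (h : ¬ T.leg v) :
    T.rnk v < (T.G.neighborSet v).ncard := by
  rcases T.label_cond v h with ⟨h1, h2⟩ | ⟨h1, h2⟩ | ⟨h1, h2, h3⟩ <;> omega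

open Classical in
/-- The dual of a UMR-tree: replace each label `U_{m,k}` by `U_{m,m-k}`. -/
noncomputable def UMRTree.dual (T : UMRTree) : UMRTree where
  V := T.V
  finite := T.finite
  G := T.G
  isTree := T.isTree
  leg := T.leg
  rnk := fun v => if T.leg v then T.rnk v else (T.G.neighborSet v).ncard - T.rnk v
  leg_leaf := T.leg_leaf
  label_cond := by
    intro v hv
    simp only [if_neg hv]
    have := T.rnk_lt hv
    rcases T.label_cond v hv with ⟨h1, h2⟩ | ⟨h1, h2⟩ | ⟨h1, h2, h3⟩
    · right; left; omega
    · left; omega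
    · right; right; omega
  no_MM := by
    intro v w hadj hv hw h1 h2
    simp only [if_neg hv] at h1
    simp only [if_neg hw] at h2
    have hv' := T.rnk_lt hv
    have hw' := T.rnk_lt hw
    exact T.no_RR v w hadj hv hw (by omega) (by omega)
  no_RR := by
    intro v w hadj hv hw h1 h2
    simp only [if_neg hv] at h1
    simp only [if_neg hw] at h2
    have hv' := T.rnk_lt hv
    have hw' := T.rnk_lt hw
    exact T.no_MM v w hadj hv hw (by omega) (by omega)

lemma UMRTree.dual_rnk_of_not_leg (T : UMRTree) {v : T.V} (h : ¬ T.leg v) :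
    T.dual.rnk v = (T.G.neighborSet v).ncard - T.rnk v := if_neg h

lemma UMRTree.dual_dual (T : UMRTree) : T.dual.dual = T := by
  obtain ⟨V, fin, G, tr, leg, rnk, a, b, c, d⟩ := T
  unfold UMRTree.dual
  congr 1
  funext v
  simp only
  by_cases h : leg v
  · rw [if_pos h, if_pos h]
  · have hlt : UMRTree.rnk ⟨V, fin, G, tr, leg, rnk, a, b, c, d⟩ v <
        (G.neighborSet v).ncard := UMRTree.rnk_lt _ h
    rw [if_neg h, if_neg h]
    simp only at hlt ⊢
    omega

/-- The dual of a pointed UMR-tree. -/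
noncomputable def PointedUMRTree.dual (P : PointedUMRTree) : PointedUMRTree where
  T := P.T.dual
  v0 := P.v0
  leg_v0 := P.leg_v0

lemma PointedUMRTree.dual_dual (P : PointedUMRTree) : P.dual.dual = P := by
  obtain ⟨T, v0, h0⟩ := P
  unfold PointedUMRTree.dual
  simp only
  congr 1 <;> try exact T.dual_dual

lemma PointedUMRTree.size_dual (P : PointedUMRTree) : P.dual.size = P.size := rfl

lemma PointedUMRTree.pointedAtM_dual (P : PointedUMRTree) :
    P.dual.pointedAtM ↔ P.pointedAtR := by
  constructor
  · rintro ⟨w, hadj, hw, h1⟩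
    have hw' : ¬ P.T.leg w := hw
    have hlt := P.T.rnk_lt hw'
    have h1' : P.T.dual.rnk w = 1 := h1
    rw [P.T.dual_rnk_of_not_leg hw'] at h1'
    exact ⟨w, hadj, hw', by omega⟩
  · rintro ⟨w, hadj, hw, h1⟩
    have hlt := P.T.rnk_lt hw
    refine ⟨w, hadj, hw, ?_⟩
    show P.T.dual.rnk w = 1
    rw [P.T.dual_rnk_of_not_leg hw]
    omega

lemma PointedUMRTree.pointedAtR_dual (P : PointedUMRTree) :
    P.dual.pointedAtR ↔ P.pointedAtM := by
  constructor
  · rintro ⟨w, hadj, hw, h1⟩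
    have hw' : ¬ P.T.leg w := hw
    have hlt := P.T.rnk_lt hw'
    have h1' : P.T.dual.rnk w + 1 = (P.T.G.neighborSet w).ncard := h1
    rw [P.T.dual_rnk_of_not_leg hw'] at h1'
    exact ⟨w, hadj, hw', by omega⟩
  · rintro ⟨w, hadj, hw, h1⟩
    have hlt := P.T.rnk_lt hw
    refine ⟨w, hadj, hw, ?_⟩
    show P.T.dual.rnk w + 1 = (P.T.G.neighborSet w).ncard
    rw [P.T.dual_rnk_of_not_leg hw]
    omega

lemma ncard_neighborSet_map {V W : Type} (G : SimpleGraph V) (H : SimpleGraph W)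
    (φ : V ≃ W) (h : ∀ v w, G.Adj v w ↔ H.Adj (φ v) (φ w)) (v : V) :
    (H.neighborSet (φ v)).ncard = (G.neighborSet v).ncard := by
  have himg : H.neighborSet (φ v) = φ '' G.neighborSet v := by
    ext w
    simp only [SimpleGraph.mem_neighborSet, Set.mem_image]
    constructor
    · intro hw
      refine ⟨φ.symm w, ?_, φ.apply_symm_apply w⟩
      rw [h]
      simpa using hw
    · rintro ⟨u, hu, rfl⟩
      exact (h v u).mp hu
  rw [himg, Set.ncard_image_of_injective _ φ.injective]

lemma PointedIso.dual {P Q : PointedUMRTree} (h : PointedIso P Q) :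
    PointedIso P.dual Q.dual := by
  obtain ⟨φ, hadj, hleg, hrnk, hv0⟩ := h
  refine ⟨φ, hadj, hleg, ?_, hv0⟩
  intro v hv
  have hv' : ¬ P.T.leg v := hv
  have hw' : ¬ Q.T.leg (φ v) := fun h' => hv' ((hleg v).mpr h')
  show P.T.dual.rnk v = Q.T.dual.rnk (φ v)
  rw [P.T.dual_rnk_of_not_leg hv', Q.T.dual_rnk_of_not_leg hw', hrnk v hv',
    ncard_neighborSet_map P.T.G Q.T.G φ hadj v]

/-- For every `n ≥ 2`, the number of isomorphism classes of pointed UMR-trees with `n`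
legs pointed at an R-vertex equals the number of those pointed at an M-vertex
(`A_R(x) = A_M(x)`). -/
theorem pointed_R_eq_pointed_M (n : ℕ) (hn : 2 ≤ n) :
    Nat.card (Quot (fun P Q : {P : PointedUMRTree // P.size = n ∧ P.pointedAtR} =>
      PointedIso P.1 Q.1)) =
    Nat.card (Quot (fun P Q : {P : PointedUMRTree // P.size = n ∧ P.pointedAtM} =>
      PointedIso P.1 Q.1)) := by
  refine Nat.card_congr (Quot.congr ?_ ?_)
  · exact
    { toFun := fun P => ⟨P.1.dual, by rw [PointedUMRTree.size_dual]; exact P.2.1,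
        (PointedUMRTree.pointedAtM_dual P.1).mpr P.2.2⟩
      invFun := fun P => ⟨P.1.dual, by rw [PointedUMRTree.size_dual]; exact P.2.1,
        (PointedUMRTree.pointedAtR_dual P.1).mpr P.2.2⟩
      left_inv := fun P => Subtype.ext P.1.dual_dual
      right_inv := fun P => Subtype.ext P.1.dual_dual }
  · intro a b
    constructor
    · exact PointedIso.dual
    · intro h
      have h2 := h.dual
      simp only [Equiv.coe_fn_mk] at h2
      rwa [a.1.dual_dual, b.1.dual_dual] at h2
end
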